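/- arXiv:2511.19274 — 3 statements merged into one kernel-verified Lean document; each statement's English description precedes it below -/
import Mathlib

section
/- Fix T ∈ ℕ, x₀ ∈ ℝ, and a noise schedule β : ℕ → ℝ with 0 < β_s < 1 for all 1 ≤ s ≤ T. On some probability space let (ε_s)_{s=1}^{T} be independent random variables, each with law gaussianReal 0 1 (the standard Gaussian on ℝ). Define the forward diffusion chain X₀ = x₀ and X_s = √(1 − β_s) · X_{s−1} + √(β_s) · ε_s for 1 ≤ s ≤ T. Then for every 0 ≤ t ≤ T, the law of X_t is gaussianReal (√(ᾱ_t) · x₀) (1 − ᾱ_t), where ᾱ_t = ∏_{s=1}^{t} (1 − β_s). -/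
/-!
By induction on `t`: `X (t-1)` is a measurable function of `ε 1, …, ε (t-1)`, hence independent
of `ε t`, so `X t` is the sum of the independent Gaussians `√(1 - β t) * X (t-1)` and
`√(β t) * ε t`. Means and variances add, giving mean `√(1 - β t) √(ᾱ (t-1)) x₀ = √(ᾱ t) x₀` and
variance `(1 - β t) (1 - ᾱ (t-1)) + β t = 1 - ᾱ t`.
-/

open MeasureTheory ProbabilityTheory

open scoped NNReal

lemma ProbabilityTheory.iIndepFun.indepFun_of_measurable_iSup {Ω ι α β : Type*}
    {mΩ : MeasurableSpace Ω} {μ : Measure Ω} [mβ : MeasurableSpace β] [MeasurableSpace α]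
    {f : ι → Ω → β} (hf : iIndepFun f μ) (hfm : ∀ i, Measurable (f i))
    {S : Set ι} {j : ι} (hj : j ∉ S) {Y : Ω → α}
    (hY : Measurable[⨆ i ∈ S, mβ.comap (f i)] Y) :
    IndepFun Y (f j) μ := by
  have h := indep_iSup_of_disjoint (fun i => (hfm i).comap_le) hf.iIndep
    (Set.disjoint_singleton_right.2 hj)
  rw [iSup_singleton] at h
  exact (IndepFun_iff_Indep _ _ _).2 (indep_of_indep_of_le_left h (measurable_iff_comap_le.1 hY))

section NoiseDrivenRecursion

variable {Ω α β : Type*} {mΩ : MeasurableSpace Ω} {μ : Measure Ω} [MeasurableSpace α]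
  [mβ : MeasurableSpace β] {T : ℕ} {ε : ℕ → Ω → β} {X : ℕ → Ω → α} {x₀ : α}
  {F : ℕ → α → β → α}

lemma measurable_iSup_comap_noise_of_recursion (hF : ∀ s, Measurable (Function.uncurry (F s)))
    (hX0 : X 0 = fun _ => x₀)
    (hXs : ∀ s, 1 ≤ s → s ≤ T → X s = fun ω => F s (X (s - 1) ω) (ε s ω)) :
    ∀ t ≤ T, Measurable[⨆ i ∈ {i : Finset.Icc 1 T | (i : ℕ) ≤ t}, mβ.comap (ε i)] (X t) := by
  intro t
  induction t with
  | zero => intro _; rw [hX0]; exact measurable_const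
  | succ t ih =>
    intro ht
    have hmem : (⟨t + 1, Finset.mem_Icc.2 ⟨by omega, ht⟩⟩ : Finset.Icc 1 T) ∈
        {i : Finset.Icc 1 T | (i : ℕ) ≤ t + 1} := le_refl (t + 1)
    have hX : Measurable[⨆ i ∈ {i : Finset.Icc 1 T | (i : ℕ) ≤ t + 1}, mβ.comap (ε i)] (X t) :=
      (ih (by omega)).mono (biSup_mono fun _ hi => Nat.le_succ_of_le hi) le_rfl
    have hε : Measurable[⨆ i ∈ {i : Finset.Icc 1 T | (i : ℕ) ≤ t + 1}, mβ.comap (ε i)]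
        (ε (t + 1)) :=
      (comap_measurable (ε (t + 1))).mono
        (le_iSup₂ (f := fun (i : Finset.Icc 1 T) _ => mβ.comap (ε i)) _ hmem) le_rfl
    rw [hXs (t + 1) (by omega) ht, Nat.add_sub_cancel]
    exact (hF (t + 1)).comp (hX.prodMk hε)

lemma indepFun_noise_succ_of_recursion (hF : ∀ s, Measurable (Function.uncurry (F s)))
    (hεmeas : ∀ s, Measurable (ε s))
    (hεindep : iIndepFun (fun s : Finset.Icc 1 T => ε (s : ℕ)) μ) (hX0 : X 0 = fun _ => x₀)
    (hXs : ∀ s, 1 ≤ s → s ≤ T → X s = fun ω => F s (X (s - 1) ω) (ε s ω)) {t : ℕ}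
    (ht : t < T) :
    IndepFun (X t) (ε (t + 1)) μ :=
  hεindep.indepFun_of_measurable_iSup (fun i => hεmeas i)
    (j := ⟨t + 1, Finset.mem_Icc.2 ⟨by omega, ht⟩⟩) (fun h : t + 1 ≤ t => by omega)
    (measurable_iSup_comap_noise_of_recursion hF hX0 hXs t ht.le)

end NoiseDrivenRecursion

section Gaussian

variable {Ω : Type*} {mΩ : MeasurableSpace Ω} {μ : Measure Ω} {X Y : Ω → ℝ} {m₁ m₂ : ℝ}
  {v₁ v₂ : ℝ≥0}

lemma map_const_mul_eq_gaussianReal (hX : μ.map X = gaussianReal m₁ v₁) (c : ℝ) :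
    μ.map (fun ω => c * X ω) = gaussianReal (c * m₁) (.mk (c ^ 2) (sq_nonneg c) * v₁) := by
  have hXm : AEMeasurable X μ := .of_map_ne_zero (hX ▸ IsProbabilityMeasure.ne_zero _)
  rw [← gaussianReal_map_const_mul, ← hX,
    AEMeasurable.map_map_of_aemeasurable (measurable_const_mul c).aemeasurable hXm]
  rfl

lemma map_const_mul_add_const_mul_eq_gaussianReal (hXY : IndepFun X Y μ)
    (hX : μ.map X = gaussianReal m₁ v₁) (hY : μ.map Y = gaussianReal m₂ v₂) (a b : ℝ) :
    μ.map (fun ω => a * X ω + b * Y ω) =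
      gaussianReal (a * m₁ + b * m₂)
        (.mk (a ^ 2) (sq_nonneg a) * v₁ + .mk (b ^ 2) (sq_nonneg b) * v₂) :=
  gaussianReal_add_gaussianReal_of_indepFun
    (hXY.comp (measurable_const_mul a) (measurable_const_mul b))
    (map_const_mul_eq_gaussianReal hX a) (map_const_mul_eq_gaussianReal hY b)

end Gaussian

/-- **Closed-form marginal of the DDPM forward process.**
With `X 0 = x₀` and `X s = √(1 − β s) · X (s−1) + √(β s) · ε s` for
`1 ≤ s ≤ T`, where the `ε s` (`1 ≤ s ≤ T`) are independent standard Gaussians,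
the law of `X t` is a Gaussian with mean `√(ᾱ t) · x₀` and variance `1 − ᾱ t`,
where `ᾱ t = ∏_{s=1}^{t} (1 − β s)`. -/
theorem ddpm_forward_marginal
    {Ω : Type*} [MeasurableSpace Ω] (μ : Measure Ω) [IsProbabilityMeasure μ]
    (T : ℕ) (x₀ : ℝ) (β : ℕ → ℝ)
    (hβ : ∀ s, 1 ≤ s → s ≤ T → 0 < β s ∧ β s < 1)
    (ε : ℕ → Ω → ℝ)
    (hεmeas : ∀ s, Measurable (ε s))
    (hεindep : iIndepFun
      (fun s : Finset.Icc 1 T => ε (s : ℕ)) μ)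
    (hεlaw : ∀ s, 1 ≤ s → s ≤ T → μ.map (ε s) = gaussianReal 0 1)
    (X : ℕ → Ω → ℝ)
    (hX0 : X 0 = fun _ => x₀)
    (hXs : ∀ s, 1 ≤ s → s ≤ T →
      X s = fun ω => Real.sqrt (1 - β s) * X (s - 1) ω + Real.sqrt (β s) * ε s ω) :
    ∀ t ≤ T,
      μ.map (X t) =
        gaussianReal (Real.sqrt (∏ s ∈ Finset.Icc 1 t, (1 - β s)) * x₀)
          (1 - ∏ s ∈ Finset.Icc 1 t, (1 - β s)).toNNReal := by
  intro t
  induction t with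
  | zero => intro _; simp [hX0, gaussianReal_zero_var]
  | succ t ih =>
    intro ht
    obtain ⟨hβpos, hβlt⟩ := hβ (t + 1) (by omega) ht
    rw [Finset.prod_Icc_succ_top (by omega)]
    set P := ∏ s ∈ Finset.Icc 1 t, (1 - β s)
    have hP : P ∈ unitInterval := unitInterval.prod_mem fun s hs => by
      obtain ⟨h1, h2⟩ := Finset.mem_Icc.1 hs
      obtain ⟨hpos, hlt⟩ := hβ s h1 (by omega)
      exact Set.Icc.mem_iff_one_sub_mem.1 ⟨hpos.le, hlt.le⟩
    have hindep : IndepFun (X t) (ε (t + 1)) μ := indepFun_noise_succ_of_recursion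
      (F := fun s x e => Real.sqrt (1 - β s) * x + Real.sqrt (β s) * e)
      (fun s => by fun_prop) hεmeas hεindep hX0 hXs (by omega)
    rw [hXs (t + 1) (by omega) ht, Nat.add_sub_cancel,
      map_const_mul_add_const_mul_eq_gaussianReal hindep (ih (by omega))
        (hεlaw (t + 1) (by omega) ht)]
    congr 1
    · rw [Real.sqrt_mul hP.1]; ring
    · have hvar : 0 ≤ 1 - P * (1 - β (t + 1)) := by nlinarith [hP.1, hP.2]
      ext
      simp only [NNReal.coe_add, NNReal.coe_mul, NNReal.coe_mk, NNReal.coe_one,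
        Real.coe_toNNReal _ hvar, Real.coe_toNNReal _ (sub_nonneg.2 hP.2),
        Real.sq_sqrt hβpos.le, Real.sq_sqrt (sub_nonneg.2 hβlt.le)]
      ring
end

section
/- Let α, ᾱ' ∈ (0,1), and set β = 1 − α and ᾱ = α · ᾱ' (so 0 < ᾱ < 1). Then for all x₀, x, y ∈ ℝ: gaussianPDFReal (√α · x) β y · gaussianPDFReal (√ᾱ' · x₀) (1 − ᾱ') x = gaussianPDFReal μ̃ β̃ x · gaussianPDFReal (√ᾱ · x₀) (1 − ᾱ) y, where μ̃ = (√α · (1 − ᾱ') · y + √ᾱ' · β · x₀) / (1 − ᾱ) and β̃ = β · (1 − ᾱ') / (1 − ᾱ). -/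
open MeasureTheory ProbabilityTheory Real

/-- **The one-dimensional DDPM posterior identity.**
With `β = 1 − α` and `ᾱ = α · ᾱ'`, for all `x₀, x, y : ℝ`:
`q(x_t = y | x_{t−1} = x) · q(x_{t−1} = x | x₀)
  = q(x_{t−1} = x | x_t = y, x₀) · q(x_t = y | x₀)`,
where the posterior is Gaussian with mean
`μ̃ = (√α (1 − ᾱ') y + √ᾱ' β x₀)/(1 − ᾱ)` and
variance `β̃ = β (1 − ᾱ')/(1 − ᾱ)`. -/
theorem ddpm_posterior_identity
    (α ᾱ' : ℝ) (hα : α ∈ Set.Ioo (0 : ℝ) 1) (hᾱ' : ᾱ' ∈ Set.Ioo (0 : ℝ) 1)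
    (x₀ x y : ℝ) :
    gaussianPDFReal (Real.sqrt α * x) (1 - α).toNNReal y *
        gaussianPDFReal (Real.sqrt ᾱ' * x₀) (1 - ᾱ').toNNReal x =
      gaussianPDFReal
          ((Real.sqrt α * (1 - ᾱ') * y + Real.sqrt ᾱ' * (1 - α) * x₀) / (1 - α * ᾱ'))
          ((1 - α) * (1 - ᾱ') / (1 - α * ᾱ')).toNNReal x *
        gaussianPDFReal (Real.sqrt (α * ᾱ') * x₀) (1 - α * ᾱ').toNNReal y := by
  obtain ⟨hα0, hα1⟩ := hα
  obtain ⟨hb0, hb1⟩ := hᾱ'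
  have ha : (0:ℝ) < 1 - α := by linarith
  have hb : (0:ℝ) < 1 - ᾱ' := by linarith
  have hc : (0:ℝ) < 1 - α * ᾱ' := by nlinarith
  have hd : (0:ℝ) < (1 - α) * (1 - ᾱ') / (1 - α * ᾱ') := by positivity
  unfold gaussianPDFReal
  rw [Real.coe_toNNReal _ ha.le, Real.coe_toNNReal _ hb.le, Real.coe_toNNReal _ hc.le,
    Real.coe_toNNReal _ hd.le, Real.sqrt_mul hα0.le]
  have hA : α = Real.sqrt α ^ 2 := (Real.sq_sqrt hα0.le).symm
  have hB : ᾱ' = Real.sqrt ᾱ' ^ 2 := (Real.sq_sqrt hb0.le).symm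
  set sa := Real.sqrt α with hsa
  set sb := Real.sqrt ᾱ' with hsb
  rw [mul_mul_mul_comm, mul_mul_mul_comm ((√(2 * π * ((1 - α) * (1 - ᾱ') / (1 - α * ᾱ'))))⁻¹)]
  have hconst : (√(2*π*(1-α)))⁻¹ * (√(2*π*(1-ᾱ')))⁻¹
      = (√(2*π*((1-α)*(1-ᾱ')/(1-α*ᾱ'))))⁻¹ * (√(2*π*(1-α*ᾱ')))⁻¹ := by
    rw [← mul_inv, ← mul_inv, ← Real.sqrt_mul (by positivity), ← Real.sqrt_mul (by positivity)]
    congr 1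
    field_simp
  rw [hconst, ← Real.exp_add, ← Real.exp_add]
  congr 2
  rw [hA] at ha hc ⊢
  rw [hB] at hb hc ⊢
  field_simp
  ring
end

section
/- Let α and β be standard Borel measurable spaces, μ and ν probability measures on α, and κ and η Markov kernels from α to β. Then klDiv (μ ⊗ₘ κ) (ν ⊗ₘ η) = klDiv μ ν + ∫ klDiv (κ a) (η a) dμ(a), where μ ⊗ₘ κ denotes the composition-product measure on α × β given by (μ ⊗ₘ κ)(A × B) = ∫_A κ(a)(B) dμ(a), and the equality holds in [0, ∞] (the integral of the a.e.-defined nonnegative function a ↦ klDiv (κ a) (η a) being taken as a Lebesgue integral with values in [0,∞]). -/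
/-!
Mathlib's `InformationTheory.klDiv` carries the correction term `ν univ - μ univ`, which vanishes
between measures of equal mass, so every divergence in the statement is Mathlib's. Mathlib's chain
rule `klDiv_compProd_eq_add` splits off `klDiv μ ν`, leaving `klDiv (μ ⊗ₘ κ) (μ ⊗ₘ η)`. When
`κ a ≪ η a` for `μ`-a.e. `a`, the density of `μ ⊗ₘ κ` with respect to `μ ⊗ₘ η` is the kernel
density `κ.rnDeriv η` (which needs `β` countably generated); writing the divergence as
`∫⁻ klFun (dP/dQ) dQ` and integrating fibrewise over `μ ⊗ₘ η` gives `∫⁻ a, klDiv (κ a) (η a) ∂μ`.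
Otherwise `μ ⊗ₘ κ` is not absolutely continuous with respect to `μ ⊗ₘ η`, so the left side is `∞`,
and so is the right, whose integrand is `∞` on a set of positive `μ`-measure.
-/

open MeasureTheory ProbabilityTheory

open scoped ENNReal Classical

/-- Kullback–Leibler divergence `∫ log (dμ/dν) dμ ∈ [0,∞]`: it equals this
integral when `μ ≪ ν` with integrable log-likelihood ratio, and `∞` otherwise. -/
noncomputable def klDiv {α : Type*} [MeasurableSpace α] (μ ν : Measure α) : ℝ≥0∞ :=
  if μ ≪ ν ∧ Integrable (llr μ ν) μ then ENNReal.ofReal (∫ x, llr μ ν x ∂μ) else ∞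

lemma klDiv_eq_informationTheory_klDiv {α : Type*} [MeasurableSpace α] {μ ν : Measure α}
    (h : μ Set.univ = ν Set.univ) : klDiv μ ν = InformationTheory.klDiv μ ν := by
  rw [klDiv, InformationTheory.klDiv_def, measureReal_def, measureReal_def, h,
    add_sub_cancel_right]

namespace ProbabilityTheory

variable {α β : Type*} {mα : MeasurableSpace α} {mβ : MeasurableSpace β}
  [MeasurableSpace.CountableOrCountablyGenerated α β]
  {μ : Measure α} {κ η : Kernel α β} [IsFiniteMeasure μ] [IsFiniteKernel κ] [IsFiniteKernel η]

lemma rnDeriv_measure_compProd_right (h_ac : ∀ᵐ a ∂μ, κ a ≪ η a) :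
    (μ ⊗ₘ κ).rnDeriv (μ ⊗ₘ η) =ᵐ[μ ⊗ₘ η] fun p ↦ κ.rnDeriv η p.1 p.2 := by
  have h_eq : μ ⊗ₘ κ = (μ ⊗ₘ η).withDensity fun p ↦ κ.rnDeriv η p.1 p.2 := by
    rw [← Measure.compProd_withDensity (Kernel.measurable_rnDeriv κ η)]
    refine Measure.compProd_congr ?_
    filter_upwards [h_ac] with a ha using (Kernel.withDensity_rnDeriv_eq ha).symm
  rw [h_eq]
  exact Measure.rnDeriv_withDensity _ (Kernel.measurable_rnDeriv κ η)

end ProbabilityTheory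

namespace InformationTheory

variable {α β : Type*} {mα : MeasurableSpace α} {mβ : MeasurableSpace β}
  [MeasurableSpace.CountableOrCountablyGenerated α β]
  {μ : Measure α} {κ η : Kernel α β} [IsFiniteMeasure μ] [IsFiniteKernel κ] [IsFiniteKernel η]

lemma klDiv_compProd_right : klDiv (μ ⊗ₘ κ) (μ ⊗ₘ η) = ∫⁻ a, klDiv (κ a) (η a) ∂μ := by
  by_cases h_ac : ∀ᵐ a ∂μ, κ a ≪ η a
  · rw [klDiv_eq_lintegral_klFun_of_ac (Measure.AbsolutelyContinuous.compProd_right h_ac)]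
    calc ∫⁻ p, ENNReal.ofReal (klFun ((μ ⊗ₘ κ).rnDeriv (μ ⊗ₘ η) p).toReal) ∂(μ ⊗ₘ η)
    _ = ∫⁻ p, ENNReal.ofReal (klFun (κ.rnDeriv η p.1 p.2).toReal) ∂(μ ⊗ₘ η) := by
      refine lintegral_congr_ae ?_
      filter_upwards [rnDeriv_measure_compProd_right h_ac] with p hp
      rw [hp]
    _ = ∫⁻ a, ∫⁻ b, ENNReal.ofReal (klFun (κ.rnDeriv η a b).toReal) ∂(η a) ∂μ :=
      Measure.lintegral_compProd (by fun_prop)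
    _ = ∫⁻ a, klDiv (κ a) (η a) ∂μ := by
      refine lintegral_congr_ae ?_
      filter_upwards [h_ac] with a ha
      rw [klDiv_eq_lintegral_klFun_of_ac ha]
      refine lintegral_congr_ae ?_
      filter_upwards [κ.rnDeriv_eq_rnDeriv_measure (η := η) (a := a)] with b hb
      rw [hb]
  · rw [klDiv_of_not_ac (mt Measure.absolutelyContinuous_compProd_right_iff.mp h_ac), eq_comm,
      eq_top_iff]
    have hs : MeasurableSet {a | κ a ≪ η a}ᶜ :=
      (Kernel.measurableSet_absolutelyContinuous κ η).compl
    calc ∞ = ∫⁻ a, {a | κ a ≪ η a}ᶜ.indicator (fun _ ↦ ∞) a ∂μ := by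
          rw [lintegral_indicator_const hs]
          exact (ENNReal.top_mul (mt ae_iff.mpr h_ac)).symm
      _ ≤ ∫⁻ a, klDiv (κ a) (η a) ∂μ :=
          lintegral_mono (Set.indicator_le fun a ha ↦ (klDiv_of_not_ac ha).ge)

end InformationTheory

theorem klDiv_compProd_chain_rule_general
    {α β : Type*} [MeasurableSpace α]
    [MeasurableSpace β] [StandardBorelSpace β]
    (μ ν : Measure α) [IsProbabilityMeasure μ] [IsProbabilityMeasure ν]
    (κ η : Kernel α β) [IsMarkovKernel κ] [IsMarkovKernel η] :
    klDiv (μ ⊗ₘ κ) (ν ⊗ₘ η) = klDiv μ ν + ∫⁻ a, klDiv (κ a) (η a) ∂μ := by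
  have h_comp : klDiv (μ ⊗ₘ κ) (ν ⊗ₘ η) = InformationTheory.klDiv (μ ⊗ₘ κ) (ν ⊗ₘ η) :=
    klDiv_eq_informationTheory_klDiv (by simp)
  have h_fst : klDiv μ ν = InformationTheory.klDiv μ ν :=
    klDiv_eq_informationTheory_klDiv (by simp)
  have h_ker (a : α) : klDiv (κ a) (η a) = InformationTheory.klDiv (κ a) (η a) :=
    klDiv_eq_informationTheory_klDiv (by simp)
  rw [h_comp, h_fst, InformationTheory.klDiv_compProd_eq_add,
    InformationTheory.klDiv_compProd_right]
  simp only [h_ker]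

/-- **Chain rule for the KL divergence over composition-products.**
For probability measures `μ, ν` on a standard Borel space `α` and Markov
kernels `κ, η` from `α` to a standard Borel space `β`,
`klDiv (μ ⊗ₘ κ) (ν ⊗ₘ η) = klDiv μ ν + ∫⁻ a, klDiv (κ a) (η a) ∂μ`. -/
theorem klDiv_compProd_chain_rule
    {α β : Type*} [MeasurableSpace α] [StandardBorelSpace α]
    [MeasurableSpace β] [StandardBorelSpace β]
    (μ ν : Measure α) [IsProbabilityMeasure μ] [IsProbabilityMeasure ν]
    (κ η : Kernel α β) [IsMarkovKernel κ] [IsMarkovKernel η] :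
    klDiv (μ ⊗ₘ κ) (ν ⊗ₘ η) = klDiv μ ν + ∫⁻ a, klDiv (κ a) (η a) ∂μ :=
  klDiv_compProd_chain_rule_general μ ν κ η
end
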